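/- Fix a vertex μ and vectors f̂, ĝ, ĥ ∈ ℚ^N; write f := f̂V and U_i := Γ^μ_i∖{i} for i∼μ. Then the entries of f̂_{⟨ĝ⟩[ĥ]} are: (f̂_{⟨ĝ⟩[ĥ]})_μ = f̂_μ − Σ_{ν∼μ} ρ_{[μ,ν]}(μ)·ĥ_ν; (f̂_{⟨ĝ⟩[ĥ]})_i = f̂_i + ĥ_i + Σ_{j∈U_i} ρ_{[i,j]}(μ)·ĝ_j for i∼μ; and (f̂_{⟨ĝ⟩[ĥ]})_i = f̂_i − ĝ_i for all other i. Furthermore, (f̂_{⟨ĝ⟩}V)_i = f_i − Σ_{ν∼μ} Σ_{j∈Γ^μ_ν} ĝ_j·φ_μ^{[ν,j]}(i)·V_{μi}; hence if ĝ ≥ 0 then (f̂_{⟨ĝ⟩}V)_i ≤ f_i, with equality when d(μ,i) ≤ 1, and with strict inequality exactly when i ∈ Γ^ν_j for some ν∼μ and some j ∈ Γ^μ_ν with ĝ_j > 0. Similarly, (f̂_{[ĥ]}V)_i = f_i + Σ_{ν∼μ} ĥ_ν·φ_μ^{[μ,ν]}(i)·V_{μi}; hence if ĥ ≥ 0 then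 (f̂_{[ĥ]}V)_i ≥ f_i, with strict inequality exactly when i ∈ Γ^μ_ν for some ν∼μ with ĥ_ν > 0. -/

import Mathlib

open Matrix BigOperators

open scoped Classical

noncomputable section

/-- Proximity data of a dual graph on vertex set `Fin N`, built from a single
root vertex by a finite sequence of elementary modifications. Vertices are
ordered by creation; each new vertex is proximate to at most two existing
(earlier) vertices, which must be adjacent to each other at that time if
there are two of them. -/
structure DualGraph where
  N : ℕ
  Npos : 0 < N
  prox : Fin N → Fin N → Prop
  prox_lt : ∀ {μ ν}, prox μ ν → ν < μ
  prox_card : ∀ μ, {ν | prox μ ν}.ncard ≤ 2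
  prox_nonempty : ∀ μ : Fin N, 0 < (μ : ℕ) → ∃ ν, prox μ ν
  prox_pair : ∀ {μ a b}, prox μ a → prox μ b → a ≠ b →
      (prox a b ∨ prox b a) ∧ ∀ ρ, ρ < μ → ¬(prox ρ a ∧ prox ρ b)

namespace DualGraph

variable (G : DualGraph)

/-- The proximity matrix `P`. -/
def P : Matrix (Fin G.N) (Fin G.N) ℚ :=
  fun μ ν => if μ = ν then 1 else if G.prox μ ν then -1 else 0

/-- `Q = P⁻¹`. -/
def Q : Matrix (Fin G.N) (Fin G.N) ℚ := (G.P)⁻¹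

/-- The valuation matrix `V = (PᵀP)⁻¹`. -/
def V : Matrix (Fin G.N) (Fin G.N) ℚ := (G.Pᵀ * G.P)⁻¹

/-- Adjacency in the dual graph: `μ ∼ ν` iff `(PᵀP)_{μν} = -1`. -/
def adj (μ ν : Fin G.N) : Prop := μ ≠ ν ∧ (G.Pᵀ * G.P) μ ν = -1

lemma adj_symm {μ ν : Fin G.N} (h : G.adj μ ν) : G.adj ν μ := by
  obtain ⟨hne, h2⟩ := h
  refine ⟨hne.symm, ?_⟩
  have ht : (G.Pᵀ * G.P)ᵀ = G.Pᵀ * G.P := by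
    rw [Matrix.transpose_mul, Matrix.transpose_transpose]
  calc (G.Pᵀ * G.P) ν μ = (G.Pᵀ * G.P)ᵀ μ ν := rfl
    _ = (G.Pᵀ * G.P) μ ν := by rw [ht]
    _ = -1 := h2

/-- The dual graph as a simple graph. -/
def graph : SimpleGraph (Fin G.N) where
  Adj := G.adj
  symm := ⟨fun _ _ h => G.adj_symm h⟩
  loopless := ⟨fun μ h => h.1 rfl⟩

/-- The graph distance `d(μ,ν)`. -/
def dist (μ ν : Fin G.N) : ℕ := G.graph.dist μ ν

/-- The set of vertices on the unique path `[μ,γ]` from `μ` to `γ`. -/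
def pathSet (μ γ : Fin G.N) : Finset (Fin G.N) :=
  Finset.univ.filter (fun ν => G.dist μ ν + G.dist ν γ = G.dist μ γ)

/-- The branch `Γ^μ_ν` emanating from `μ` towards `ν`: the maximal connected
subgraph of `Γ` containing `ν` but not `μ` (with `Γ^μ_μ = ∅`). -/
def branch (μ ν : Fin G.N) : Finset (Fin G.N) :=
  Finset.univ.filter (fun η => ν ≠ μ ∧ η ≠ μ ∧ μ ∉ G.pathSet ν η)

/-- The set of vertices adjacent to `μ`. -/
def nbrs (μ : Fin G.N) : Finset (Fin G.N) := Finset.univ.filter (fun ν => G.adj μ ν)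

/-- The valence `v_Γ(μ)`: the number of vertices adjacent to `μ`. -/
def valence (μ : Fin G.N) : ℕ := (G.nbrs μ).card

/-- The weight `w_Γ(μ) = (PᵀP)_{μμ}`. -/
def w (μ : Fin G.N) : ℚ := (G.Pᵀ * G.P) μ μ

/-- The canonical vector `k`, `k_ν = Σ_μ q_{νμ}`. -/
def kvec : Fin G.N → ℚ := fun ν => ∑ μ, G.Q ν μ

/-- A divisor with valuation vector `f` is antinef iff its factorization
vector `f̂ = f PᵀP` is nonnegative. -/
def Antinef (f : Fin G.N → ℚ) : Prop := ∀ ν, 0 ≤ (f ᵥ* (G.Pᵀ * G.P)) ν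

/-- `λ(fE, gE; ν) = (f_ν + k_ν + 1)/g_ν` for divisors with valuation
vectors `f`, `g`. -/
def lamDiv (f g : Fin G.N → ℚ) (ν : Fin G.N) : ℚ := (f ν + G.kvec ν + 1) / g ν

/-- `ρ_{[μ,γ]}(ν) = V_{γν}/V_{μν}`. -/
def rho (μ γ ν : Fin G.N) : ℚ := G.V γ ν / G.V μ ν

/-- `r̂_{[μ,γ]} = 𝟙_γ − ρ_{[μ,γ]}(μ)·𝟙_μ`. -/
def rhat (μ γ : Fin G.N) : Fin G.N → ℚ :=
  fun j => (if j = γ then 1 else 0) - G.rho μ γ μ * (if j = μ then 1 else 0)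

/-- `φ_η^{[μ,γ]}(ν) = (r̂_{[μ,γ]}V)_ν / V_{ην}`. -/
def phi (η μ γ ν : Fin G.N) : ℚ := (G.rhat μ γ ᵥ* G.V) ν / G.V η ν

/-- The transform `f̂_{⟨ĝ⟩[ĥ]}` relative to the vertex `μ`. -/
def transform (μ : Fin G.N) (fh gh hh : Fin G.N → ℚ) : Fin G.N → ℚ :=
  fh - (∑ i ∈ G.nbrs μ, ∑ j ∈ G.branch μ i, gh j • G.rhat i j)
     + ∑ i ∈ G.nbrs μ, hh i • G.rhat μ i

/-- The transform `f̂^𝒩 = f̂ − Σ_i f̂_i·r̂_{[μ,i]}` relative to the vertex `μ`. -/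
def nmap (μ : Fin G.N) (fh : Fin G.N → ℚ) : Fin G.N → ℚ :=
  fh - ∑ i, fh i • G.rhat μ i

/-- A vertex is free if it is proximate to at most one vertex. -/
def Free (μ : Fin G.N) : Prop := {ν | G.prox μ ν}.ncard ≤ 1

/-- `μ` is infinitely near to `ν` (written `ν ⊂ μ`): the reflexive-transitive
closure of proximity. -/
def InfNear (μ ν : Fin G.N) : Prop := Relation.ReflTransGen G.prox μ ν

/-- The root vertex. -/
def root : Fin G.N := ⟨0, G.Npos⟩

/-- The branch `Γ^μ_ν` is anterior to `μ` if `μ` is infinitely near to some of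
its vertices; otherwise it is posterior. -/
def Anterior (μ ν : Fin G.N) : Prop := ∃ η ∈ G.branch μ ν, G.InfNear μ η

/-- The pair `(γ,τ)` associated to `μ`. -/
def PairAssociated (γ τ μ : Fin G.N) : Prop :=
  G.InfNear τ γ ∧ G.InfNear μ τ ∧ G.Free τ ∧
  (∀ ν, G.Free ν → G.InfNear μ ν → G.InfNear τ ν) ∧
  ((¬ G.Free γ ∧ ∀ ν, ¬ G.Free ν → G.InfNear τ ν → G.InfNear γ ν) ∨
   ((∀ ν, G.InfNear τ ν → G.Free ν) ∧ γ = G.root))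

/-- The entries of `V` as natural numbers (they are positive integers). -/
def Vnat (μ ν : Fin G.N) : ℕ := (G.V μ ν).num.toNat

/-- The submonoid `SV^μ_ν` of `ℕ` generated by `{V_{μi} : i ∈ Γ^μ_ν ∪ {μ}}`. -/
def SVb (μ ν : Fin G.N) : AddSubmonoid ℕ :=
  AddSubmonoid.closure ↑((insert μ (G.branch μ ν)).image (G.Vnat μ))

/-- `s^μ_ν = gcd{V_{μi} : i ∈ Γ^μ_ν ∪ {μ}}`. -/
def sgcd (μ ν : Fin G.N) : ℕ := (insert μ (G.branch μ ν)).gcd (G.Vnat μ)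

/-- The submonoid `S^μ` of `ℕ` generated by the `s^μ_ν`, `ν ∈ Γ`. -/
def Ssg (μ : Fin G.N) : AddSubmonoid ℕ :=
  AddSubmonoid.closure (Set.range (fun ν => G.sgcd μ ν))

/-- The valuation vector `d = d̂V` of the ideal with factorization vector `d̂`. -/
def dval (dh : Fin G.N → ℕ) : Fin G.N → ℚ := (fun i => (dh i : ℚ)) ᵥ* G.V

/-- `λ(a,ν) = (a + k_ν + 1)/d_ν`. -/
def lamA (dh : Fin G.N → ℕ) (a : ℚ) (ν : Fin G.N) : ℚ :=
  (a + G.kvec ν + 1) / G.dval dh ν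

/-- The set of jumping numbers of the ideal with factorization vector `d̂`
supported at the vertex `μ`. -/
def Hset (dh : Fin G.N → ℕ) (μ : Fin G.N) : Set ℚ :=
  { ξ | ∃ f : Fin G.N → ℤ, G.Antinef (fun i => (f i : ℚ)) ∧
      (∀ ν, G.lamA dh (f μ : ℚ) μ ≤ G.lamA dh (f ν : ℚ) ν) ∧
      ξ = G.lamA dh (f μ : ℚ) μ }

end DualGraph
end

/-!
The transform adds multiples of the vectors `r̂_{[ν,j]}` to `f̂`, so everything reduces to the
sign of `(r̂_{[ν,j]} V)_x = (V_{νν} V_{xj} - V_{jν} V_{xν}) / V_{νν}`.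

`PᵀP` is positive definite, its off-diagonal entries are `-1` on edges and `0` elsewhere, and
`Γ` is a tree (it is connected with `N - 1` edges). The vector
`z = V (V_{νν} 𝟙_j - V_{jν} 𝟙_ν)` satisfies `PᵀP z = V_{νν} 𝟙_j - V_{jν} 𝟙_ν` and `z_ν = 0`, so on
a component of `Γ ∖ {ν}` avoiding `j` it is `PᵀP`-harmonic up to its boundary, hence zero by
positive definiteness: `V_{νν} V_{xj} = V_{jν} V_{xν}` whenever `ν ∈ [j,x]`. If `ν ∉ [j,x]`, the
neighbour `ν'` of `ν` towards both `j` and `x` and the strict Cauchy–Schwarz inequality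
`V_{νν'}² < V_{νν} V_{ν'ν'}` give `V_{jν} V_{xν} < V_{νν} V_{xj}` by induction on `d(ν,j)`.
Hence `(r̂_{[ν,j]} V)_x ≥ 0`, with strict inequality exactly on the branch `Γ^ν_j`.
-/

lemma Matrix.PosDef.eq_zero_of_mulVec_apply_eq_zero {n R : Type*} [Fintype n] [Ring R]
    [PartialOrder R] [StarRing R] {M : Matrix n n R} (hM : M.PosDef) {y : n → R}
    (hy : ∀ a, y a ≠ 0 → (M *ᵥ y) a = 0) : y = 0 := by
  by_contra h
  have hpos := hM.dotProduct_mulVec_pos h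
  rw [dotProduct, Finset.sum_eq_zero fun a _ => ?_] at hpos
  · exact lt_irrefl _ hpos
  · by_cases ha : y a = 0
    · simp [ha]
    · simp [hy a ha]

lemma Finset.sum_mul_pos_iff_of_nonneg {ι R : Type*} [Semiring R] [LinearOrder R]
    [IsStrictOrderedRing R] {s : Finset ι} {f g : ι → R} (hf : ∀ k ∈ s, 0 ≤ f k)
    (hg : ∀ k ∈ s, 0 ≤ g k) : 0 < ∑ k ∈ s, f k * g k ↔ ∃ k ∈ s, 0 < f k ∧ 0 < g k := by
  rw [Finset.sum_pos_iff_of_nonneg fun k hk => mul_nonneg (hf k hk) (hg k hk)]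
  refine exists_congr fun k => and_congr_right fun hk =>
    ⟨fun h => ⟨?_, ?_⟩, fun h => mul_pos h.1 h.2⟩
  · exact (hf k hk).lt_of_ne fun h' => by simp [← h'] at h
  · exact (hg k hk).lt_of_ne fun h' => by simp [← h'] at h

namespace SimpleGraph

variable {V : Type*} {T : SimpleGraph V}

lemma Connected.exists_adj_dist_add_one (hT : T.Connected) {u v : V} (h : u ≠ v) :
    ∃ w, T.Adj u w ∧ T.dist w v + 1 = T.dist u v := by
  obtain ⟨p, hp⟩ := hT.exists_walk_length_eq_dist u v
  cases p with
  | nil => exact absurd rfl h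
  | cons hadj q =>
    refine ⟨_, hadj, le_antisymm ?_ ?_⟩
    · rw [← hp, Walk.length_cons]; exact Nat.add_le_add_right (dist_le q) 1
    · calc T.dist u v ≤ T.dist u _ + T.dist _ v := hT.dist_triangle
        _ = _ := by rw [dist_eq_one_iff_adj.2 hadj, add_comm]

lemma IsTree.dist_add_dist_eq_iff_mem_support (hT : T.IsTree) {a b x : V} {p : T.Walk a b}
    (hp : p.IsPath) : T.dist a x + T.dist x b = T.dist a b ↔ x ∈ p.support := by
  classical
  constructor
  · intro h
    obtain ⟨q₁, h₁⟩ := hT.connected.exists_walk_length_eq_dist a x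
    obtain ⟨q₂, h₂⟩ := hT.connected.exists_walk_length_eq_dist x b
    have hq : (q₁.append q₂).IsPath :=
      Walk.isPath_of_length_eq_dist _ (by rw [Walk.length_append, h₁, h₂, h])
    rw [(hT.existsUnique_path a b).unique hp hq, Walk.mem_support_append_iff]
    exact Or.inl q₁.end_mem_support
  · intro hx
    obtain ⟨q, hq, hql⟩ := hT.connected.exists_path_of_dist a b
    have hlen := congrArg Walk.length (p.take_spec hx)
    have hpl : p.length = T.dist a b := by rw [(hT.existsUnique_path a b).unique hp hq, hql]
    rw [Walk.length_append] at hlen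
    have := dist_le (p.takeUntil x hx)
    have := dist_le (p.dropUntil x hx)
    have := hT.connected.dist_triangle (u := a) (v := x) (w := b)
    omega

lemma IsTree.dist_add_dist_eq_or (hT : T.IsTree) {a b c x : V}
    (h : T.dist a x + T.dist x c = T.dist a c) :
    T.dist a x + T.dist x b = T.dist a b ∨ T.dist b x + T.dist x c = T.dist b c := by
  classical
  obtain ⟨p, hp, -⟩ := hT.connected.exists_path_of_dist a b
  obtain ⟨q, hq, -⟩ := hT.connected.exists_path_of_dist b c
  have hx := (hT.dist_add_dist_eq_iff_mem_support (p.append q).toPath.2).1 h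
  rw [hT.dist_add_dist_eq_iff_mem_support hp, hT.dist_add_dist_eq_iff_mem_support hq,
    ← Walk.mem_support_append_iff]
  exact Walk.support_toPath_subset_support _ hx

lemma IsTree.exists_adj_dist_add_one_of_ne (hT : T.IsTree) {a b c : V}
    (h : T.dist a c + T.dist c b ≠ T.dist a b) :
    ∃ c', T.Adj c c' ∧ T.dist c' a + 1 = T.dist c a ∧ T.dist c' b + 1 = T.dist c b := by
  have hca : c ≠ a := by rintro rfl; simp at h
  obtain ⟨c', hadj, hc'a⟩ := hT.connected.exists_adj_dist_add_one hca
  refine ⟨c', hadj, hc'a, ?_⟩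
  have h1 : T.dist c c' = 1 := dist_eq_one_iff_adj.2 hadj
  rcases hT.dist_eq_dist_add_one_of_adj b hadj with hb | hb
  · rw [dist_comm (u := c'), dist_comm (u := c), hb]
  · have := hT.dist_add_dist_eq_or (a := c') (x := c) (c := b) (b := a)
      (by rw [dist_comm, h1, dist_comm (u := c'), hb, dist_comm (u := b)]; ring)
    rw [dist_comm (v := c), h1, dist_comm (u := c)] at this
    rcases this with h' | h'
    · rw [dist_comm (u := a)] at h'; omega
    · exact absurd (by rw [dist_comm (u := a)] at h' ⊢; omega) h

end SimpleGraph

namespace DualGraph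

variable (G : DualGraph)

lemma not_prox_self (μ : Fin G.N) : ¬ G.prox μ μ := fun h => (G.prox_lt h).false

lemma P_eq_sub (μ ν : Fin G.N) :
    G.P μ ν = (if μ = ν then 1 else 0) - if G.prox μ ν then 1 else 0 := by
  by_cases h : μ = ν
  · subst h; simp [P, G.not_prox_self]
  · simp only [P, h, if_false]; split_ifs <;> norm_num

lemma P_isLowerTriangular : G.P.IsLowerTriangular := by
  intro μ ν (h : μ < ν)
  have : ¬ G.prox μ ν := fun hp => lt_asymm h (G.prox_lt hp)
  simp [P, h.ne, this]

lemma isUnit_P : IsUnit G.P := by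
  rw [Matrix.isUnit_iff_isUnit_det, Matrix.det_of_isLowerTriangular _ G.P_isLowerTriangular]
  simp [P]

lemma posDef_PtP : (G.Pᵀ * G.P).PosDef := by
  simpa [Matrix.conjTranspose_eq_transpose_of_trivial] using
    Matrix.PosDef.conjTranspose_mul_self G.P (Matrix.mulVec_injective_iff_isUnit.2 G.isUnit_P)

lemma posDef_V : G.V.PosDef := G.posDef_PtP.inv

lemma PtP_mul_V : G.Pᵀ * G.P * G.V = 1 :=
  Matrix.mul_nonsing_inv _ (Matrix.isUnit_iff_isUnit_det _ |>.1 G.posDef_PtP.isUnit)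

lemma V_comm (a b : Fin G.N) : G.V a b = G.V b a := by
  simpa using (G.posDef_V.isHermitian.apply a b).symm

lemma V_eq_Q_mul_Qt : G.V = G.Q * G.Qᵀ := by
  rw [V, Matrix.mul_inv_rev, ← Matrix.transpose_nonsing_inv]; rfl

lemma P_mul_Q : G.P * G.Q = 1 :=
  Matrix.mul_nonsing_inv _ (Matrix.isUnit_iff_isUnit_det _ |>.1 G.isUnit_P)

lemma Q_apply_eq (μ ν : Fin G.N) :
    G.Q μ ν = (if μ = ν then 1 else 0) + ∑ ρ ∈ Finset.univ.filter (G.prox μ), G.Q ρ ν := by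
  have h := congrFun (congrFun G.P_mul_Q μ) ν
  simp only [Matrix.mul_apply, P_eq_sub, sub_mul, ite_mul, one_mul, zero_mul,
    Finset.sum_sub_distrib, Finset.sum_ite_eq, Finset.mem_univ, if_true, Matrix.one_apply,
    ← Finset.sum_filter] at h
  linarith

lemma Q_nonneg (μ ν : Fin G.N) : 0 ≤ G.Q μ ν := by
  induction μ using WellFoundedLT.induction with
  | _ μ ih =>
    rw [Q_apply_eq]
    have := Finset.sum_nonneg fun ρ (hρ : ρ ∈ Finset.univ.filter (G.prox μ)) =>
      ih ρ (G.prox_lt (Finset.mem_filter.1 hρ).2)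
    positivity

lemma one_le_Q_root (μ : Fin G.N) : 1 ≤ G.Q μ G.root := by
  induction μ using WellFoundedLT.induction with
  | _ μ ih =>
    rw [Q_apply_eq]
    rcases Nat.eq_zero_or_pos μ with h0 | hpos
    · have hμ : μ = G.root := Fin.ext h0
      have := Finset.sum_nonneg fun ρ (_ : ρ ∈ Finset.univ.filter (G.prox μ)) => G.Q_nonneg ρ G.root
      rw [if_pos hμ]; linarith
    · obtain ⟨ν, hν⟩ := G.prox_nonempty μ hpos
      have := Finset.single_le_sum (fun ρ _ => G.Q_nonneg ρ G.root)
        (Finset.mem_filter.2 ⟨Finset.mem_univ ν, hν⟩)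
      have := ih ν (G.prox_lt hν)
      split_ifs <;> linarith

lemma one_le_V (a b : Fin G.N) : 1 ≤ G.V a b := by
  rw [V_eq_Q_mul_Qt, Matrix.mul_apply]
  calc 1 ≤ G.Q a G.root * G.Q b G.root :=
        one_le_mul_of_one_le_of_one_le (G.one_le_Q_root a) (G.one_le_Q_root b)
    _ ≤ _ := Finset.single_le_sum (f := fun ρ => G.Q a ρ * G.Qᵀ ρ b)
        (fun ρ _ => mul_nonneg (G.Q_nonneg a ρ) (G.Q_nonneg b ρ)) (Finset.mem_univ _)

lemma V_pos (a b : Fin G.N) : 0 < G.V a b := zero_lt_one.trans_le (G.one_le_V a b)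

lemma V_ne_zero (a b : Fin G.N) : G.V a b ≠ 0 := (G.V_pos a b).ne'

lemma PtP_apply (a b : Fin G.N) : (G.Pᵀ * G.P) a b = ∑ ρ, G.P ρ a * G.P ρ b := by
  simp [Matrix.mul_apply]

lemma PtP_apply_of_ne {a b : Fin G.N} (hab : a ≠ b) :
    (G.Pᵀ * G.P) a b = (Finset.univ.filter fun ρ => G.prox ρ a ∧ G.prox ρ b).card
      - (if G.prox a b then 1 else 0) - if G.prox b a then 1 else 0 := by
  have hterm : ∀ ρ, G.P ρ a * G.P ρ b = (if G.prox ρ a ∧ G.prox ρ b then 1 else 0)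
      - (if ρ = a then (if G.prox a b then 1 else 0) else 0)
      - (if ρ = b then (if G.prox b a then 1 else 0) else 0) := by
    intro ρ
    rw [P_eq_sub, P_eq_sub]
    split_ifs <;> simp_all [G.not_prox_self]
  simp only [PtP_apply, hterm, Finset.sum_sub_distrib, Finset.sum_boole, Finset.sum_ite_eq',
    Finset.mem_univ, if_true]

lemma card_common_prox_le_one {a b : Fin G.N} (hab : a ≠ b) :
    (Finset.univ.filter fun ρ => G.prox ρ a ∧ G.prox ρ b).card ≤ 1 := by
  refine Finset.card_le_one.2 fun ρ hρ σ hσ => ?_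
  simp only [Finset.mem_filter, Finset.mem_univ, true_and] at hρ hσ
  by_contra hne
  rcases lt_or_gt_of_ne hne with h | h
  · exact (G.prox_pair hσ.1 hσ.2 hab).2 ρ h hρ
  · exact (G.prox_pair hρ.1 hρ.2 hab).2 σ h hσ

lemma PtP_apply_of_ne_eq_zero_or {a b : Fin G.N} (hab : a ≠ b) :
    (G.Pᵀ * G.P) a b = 0 ∨ (G.Pᵀ * G.P) a b = -1 := by
  have hasymm : G.prox a b → ¬ G.prox b a := fun h h' => lt_asymm (G.prox_lt h) (G.prox_lt h')
  rw [G.PtP_apply_of_ne hab]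
  rcases Nat.le_one_iff_eq_zero_or_eq_one.1 (G.card_common_prox_le_one hab) with h | h
  · rw [h]
    by_cases h1 : G.prox a b
    · simp [h1, hasymm h1]
    · split_ifs <;> norm_num
  · obtain ⟨ρ, hρ⟩ := Finset.card_pos.1 (h ▸ Nat.one_pos)
    simp only [Finset.mem_filter, Finset.mem_univ, true_and] at hρ
    rcases (G.prox_pair hρ.1 hρ.2 hab).1 with hp | hp
    · simp [h, hp, hasymm hp]
    · have : ¬ G.prox a b := fun h' => hasymm h' hp
      simp [h, hp, this]

lemma PtP_apply_of_not_adj {a b : Fin G.N} (hab : a ≠ b) (h : ¬ G.adj a b) :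
    (G.Pᵀ * G.P) a b = 0 :=
  (G.PtP_apply_of_ne_eq_zero_or hab).resolve_right fun h' => h ⟨hab, h'⟩

lemma exists_prox_prox_of_not_adj {a b : Fin G.N} (hp : G.prox a b) (h : ¬ G.adj a b) :
    ∃ ρ, G.prox ρ a ∧ G.prox ρ b := by
  have hab : a ≠ b := (G.prox_lt hp).ne'
  have h0 := G.PtP_apply_of_not_adj hab h
  have hba : ¬ G.prox b a := fun h' => lt_asymm (G.prox_lt hp) (G.prox_lt h')
  rw [G.PtP_apply_of_ne hab, if_pos hp, if_neg hba] at h0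
  obtain ⟨ρ, hρ⟩ := Finset.card_pos.1 (by exact_mod_cast (by linarith : (0 : ℚ) <
    (Finset.univ.filter fun ρ => G.prox ρ a ∧ G.prox ρ b).card))
  exact ⟨ρ, by simpa using hρ⟩

lemma reachable_of_prox {μ ν : Fin G.N} (h : G.prox μ ν) : G.graph.Reachable μ ν := by
  induction μ using WellFoundedGT.induction generalizing ν with
  | _ μ ih =>
    by_cases hadj : G.adj μ ν
    · exact SimpleGraph.Adj.reachable hadj
    obtain ⟨ρ, hρμ, hρν⟩ := G.exists_prox_prox_of_not_adj h hadj
    exact (ih ρ (G.prox_lt hρμ) hρμ).symm.trans (ih ρ (G.prox_lt hρμ) hρν)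

lemma reachable_root (μ : Fin G.N) : G.graph.Reachable μ G.root := by
  induction μ using WellFoundedLT.induction with
  | _ μ ih =>
    rcases Nat.eq_zero_or_pos μ with h0 | hpos
    · rw [show μ = G.root from Fin.ext h0]
    · obtain ⟨ν, hν⟩ := G.prox_nonempty μ hpos
      exact (G.reachable_of_prox hν).trans (ih ν (G.prox_lt hν))

lemma connected : G.graph.Connected :=
  have : Nonempty (Fin G.N) := ⟨G.root⟩
  ⟨fun a b => (G.reachable_root a).trans (G.reachable_root b).symm⟩

lemma sum_P_row (ρ : Fin G.N) : ∑ a, G.P ρ a = 1 - (Finset.univ.filter (G.prox ρ)).card := by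
  simp [P_eq_sub, Finset.sum_sub_distrib, Finset.sum_boole]

lemma sum_P_row_sq (ρ : Fin G.N) :
    ∑ a, G.P ρ a ^ 2 = 1 + (Finset.univ.filter (G.prox ρ)).card := by
  have h : ∀ a, G.P ρ a ^ 2 = (if ρ = a then 1 else 0) + if G.prox ρ a then 1 else 0 := by
    intro a
    by_cases h : ρ = a
    · subst h; simp [P, G.not_prox_self]
    · simp only [P, h, if_false]; split_ifs <;> norm_num
  simp [h, Finset.sum_add_distrib, Finset.sum_boole]

lemma one_add_card_prox_sub_sq (ρ : Fin G.N) :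
    (1 + (Finset.univ.filter (G.prox ρ)).card : ℚ) - (1 - (Finset.univ.filter (G.prox ρ)).card) ^ 2
      = if ρ = G.root then 0 else 2 := by
  have hle : (Finset.univ.filter (G.prox ρ)).card ≤ 2 := by
    simpa [Set.ncard_eq_toFinset_card'] using G.prox_card ρ
  split_ifs with hr
  · have : Finset.univ.filter (G.prox ρ) = ∅ :=
      Finset.filter_eq_empty_iff.2 fun ν _ hν => Nat.not_lt_zero _ (hr ▸ G.prox_lt hν)
    simp [this]
  · obtain ⟨ν, hν⟩ := G.prox_nonempty ρ (Nat.pos_of_ne_zero fun h => hr (Fin.ext h))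
    have hpos : 0 < (Finset.univ.filter (G.prox ρ)).card := Finset.card_pos.2 ⟨ν, by simpa⟩
    interval_cases (Finset.univ.filter (G.prox ρ)).card <;> norm_num

lemma PtP_apply_eq_ite (a b : Fin G.N) : (G.Pᵀ * G.P) a b
    = (if a = b then (G.Pᵀ * G.P) a a else 0) - if G.adj a b then 1 else 0 := by
  by_cases h : a = b
  · have : ¬ G.adj a a := fun h => h.1 rfl
    subst h; simp [this]
  · by_cases hadj : G.adj a b
    · simp [h, hadj, hadj.2]
    · simp [h, hadj, G.PtP_apply_of_not_adj h hadj]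

lemma degree_eq_PtP (a : Fin G.N) :
    (G.graph.degree a : ℚ) = (G.Pᵀ * G.P) a a - ∑ b, (G.Pᵀ * G.P) a b := by
  rw [Finset.sum_congr rfl fun b _ => G.PtP_apply_eq_ite a b]
  simp only [← SimpleGraph.card_neighborFinset_eq_degree, SimpleGraph.neighborFinset_eq_filter,
    Finset.sum_sub_distrib, Finset.sum_ite_eq, Finset.mem_univ, if_true, Finset.sum_boole,
    sub_sub_cancel]
  rfl

-- `∑ deg = tr (PᵀP) - 𝟙ᵀ PᵀP 𝟙`, and both terms are sums over the rows of `P`.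
lemma sum_degree : ∑ a, (G.graph.degree a : ℚ) = 2 * (G.N - 1) := by
  have hdiag : ∑ a, (G.Pᵀ * G.P) a a = ∑ ρ, (1 + (Finset.univ.filter (G.prox ρ)).card : ℚ) := by
    simp only [PtP_apply, ← sq]
    rw [Finset.sum_comm]
    exact Finset.sum_congr rfl fun ρ _ => G.sum_P_row_sq ρ
  have htotal : ∑ a, ∑ b, (G.Pᵀ * G.P) a b
      = ∑ ρ, (1 - (Finset.univ.filter (G.prox ρ)).card : ℚ) ^ 2 :=
    calc ∑ a, ∑ b, (G.Pᵀ * G.P) a b = ∑ a, ∑ ρ, ∑ b, G.P ρ a * G.P ρ b := by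
          simp only [PtP_apply]; exact Finset.sum_congr rfl fun a _ => Finset.sum_comm
      _ = ∑ ρ, (∑ a, G.P ρ a) * ∑ b, G.P ρ b := by
          rw [Finset.sum_comm]; simp only [Finset.sum_mul_sum]
      _ = _ := by simp only [sum_P_row, sq]
  rw [Finset.sum_congr rfl fun a _ => G.degree_eq_PtP a, Finset.sum_sub_distrib, hdiag, htotal,
    ← Finset.sum_sub_distrib, Finset.sum_congr rfl fun ρ _ => G.one_add_card_prox_sub_sq ρ,
    Finset.sum_ite]
  rw [Finset.sum_const_zero, zero_add, Finset.sum_const, Finset.filter_ne', Finset.card_erase_of_mem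
    (Finset.mem_univ _), Finset.card_univ, Fintype.card_fin, nsmul_eq_mul, Nat.cast_sub G.Npos]
  push_cast; ring

lemma card_edgeSet_add_one : Nat.card G.graph.edgeSet + 1 = G.N := by
  have h := G.graph.sum_degrees_eq_twice_card_edges
  rw [SimpleGraph.edgeFinset_card, ← Nat.card_eq_fintype_card] at h
  have hq : (2 * Nat.card G.graph.edgeSet : ℚ) = 2 * (G.N - 1) := by
    rw [← G.sum_degree]; exact_mod_cast h.symm
  have := G.Npos
  have : (Nat.card G.graph.edgeSet : ℚ) + 1 = G.N := by linarith
  exact_mod_cast this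

lemma isTree : G.graph.IsTree :=
  SimpleGraph.isTree_iff_connected_and_card.2 ⟨G.connected, by simpa using G.card_edgeSet_add_one⟩

lemma mem_pathSet {a b x : Fin G.N} :
    x ∈ G.pathSet a b ↔ G.graph.dist a x + G.graph.dist x b = G.graph.dist a b := by
  rw [pathSet, Finset.mem_filter]
  exact and_iff_right (Finset.mem_univ x)

lemma left_mem_pathSet (a b : Fin G.N) : a ∈ G.pathSet a b := by simp [mem_pathSet]

lemma right_mem_pathSet (a b : Fin G.N) : b ∈ G.pathSet a b := by simp [mem_pathSet]

lemma mem_pathSet_comm {a b x : Fin G.N} : x ∈ G.pathSet a b ↔ x ∈ G.pathSet b a := by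
  rw [mem_pathSet, mem_pathSet, SimpleGraph.dist_comm (u := a) (v := x),
    SimpleGraph.dist_comm (u := x) (v := b), SimpleGraph.dist_comm (u := a) (v := b)]
  omega

lemma mem_pathSet_self {a x : Fin G.N} : x ∈ G.pathSet a a ↔ x = a := by
  simp [mem_pathSet, G.connected.dist_eq_zero_iff, eq_comm]

lemma mem_pathSet_of_adj {a b x : Fin G.N} (hab : G.adj a b) (hx : x ∈ G.pathSet a b) :
    x = a ∨ x = b := by
  have h1 : G.graph.dist a b = 1 := SimpleGraph.dist_eq_one_iff_adj.2 hab
  rw [mem_pathSet, h1] at hx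
  rcases Nat.eq_zero_or_pos (G.graph.dist a x) with h | h
  · exact Or.inl (G.connected.dist_eq_zero_iff.1 h).symm
  · exact Or.inr (G.connected.dist_eq_zero_iff.1 (by omega))

lemma mem_pathSet_or {a b c x : Fin G.N} (hx : x ∈ G.pathSet a c) :
    x ∈ G.pathSet a b ∨ x ∈ G.pathSet b c := by
  simp only [mem_pathSet] at hx ⊢
  exact G.isTree.dist_add_dist_eq_or hx

lemma exists_adj_mem_pathSet_of_not_mem {a b c : Fin G.N} (h : c ∉ G.pathSet a b) :
    ∃ c', G.adj c c' ∧ c' ∈ G.pathSet c a ∧ c' ∈ G.pathSet c b := by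
  rw [mem_pathSet] at h
  obtain ⟨c', hadj, ha, hb⟩ := G.isTree.exists_adj_dist_add_one_of_ne h
  have h1 : G.graph.dist c c' = 1 := SimpleGraph.dist_eq_one_iff_adj.2 hadj
  refine ⟨c', hadj, ?_, ?_⟩ <;> rw [mem_pathSet] <;> omega

lemma not_adj_of_adj_of_adj {a b c : Fin G.N} (hab : G.adj a b) (hac : G.adj a c) :
    ¬ G.adj b c := fun hbc => G.isTree.dist_ne_of_adj a hbc <| by
  rw [SimpleGraph.dist_eq_one_iff_adj.2 hab, SimpleGraph.dist_eq_one_iff_adj.2 hac]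

lemma V_mul_V_eq_of_separates {ν j i : Fin G.N} (A : Finset (Fin G.N)) (hi : i ∈ A) (hj : j ∉ A)
    (hν : ν ∉ A) (hA : ∀ a ∈ A, ∀ b, G.adj a b → b ∈ A ∨ b = ν) :
    G.V ν ν * G.V i j = G.V j ν * G.V i ν := by
  set w : Fin G.N → ℚ := Pi.single j (G.V ν ν) - Pi.single ν (G.V j ν)
  set z := G.V *ᵥ w
  have hz : ∀ b, z b = G.V ν ν * G.V b j - G.V j ν * G.V b ν := by
    intro b; simp [z, w, Matrix.mulVec_sub, Matrix.mulVec_single]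
  have hMz : (G.Pᵀ * G.P) *ᵥ z = w := by
    rw [Matrix.mulVec_mulVec, G.PtP_mul_V, Matrix.one_mulVec]
  set y : Fin G.N → ℚ := fun b => if b ∈ A then z b else 0
  have hMy : ∀ a ∈ A, ((G.Pᵀ * G.P) *ᵥ y) a = 0 := by
    intro a ha
    have : ((G.Pᵀ * G.P) *ᵥ y) a = ((G.Pᵀ * G.P) *ᵥ z) a := by
      simp only [Matrix.mulVec, dotProduct]
      refine Finset.sum_congr rfl fun b _ => ?_
      by_cases hb : b ∈ A
      · simp [y, hb]
      by_cases hbν : b = ν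
      · have hzν : z ν = 0 := by rw [hz, G.V_comm ν j]; ring
        simp [y, hbν, hzν]
      have hab : a ≠ b := fun h => hb (h ▸ ha)
      simp [y, hb, G.PtP_apply_of_not_adj hab fun h => (hA a ha b h).elim hb hbν]
    have haj : a ≠ j := fun h => hj (h ▸ ha)
    have haν : a ≠ ν := fun h => hν (h ▸ ha)
    simp [this, hMz, w, haj, haν]
  have hy : y = 0 := G.posDef_PtP.eq_zero_of_mulVec_apply_eq_zero fun a ha =>
    hMy a (by by_contra h; simp [y, h] at ha)
  have := congrFun hy i
  simp only [y, hi, if_true, hz, Pi.zero_apply] at this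
  linarith

lemma V_mul_V_eq_of_mem_pathSet {ν j i : Fin G.N} (hν : ν ∈ G.pathSet j i) :
    G.V ν ν * G.V i j = G.V j ν * G.V i ν := by
  by_cases hνi : ν = i
  · subst hνi; rw [G.V_comm ν j]; ring
  by_cases hνj : ν = j
  · subst hνj; ring
  refine G.V_mul_V_eq_of_separates (Finset.univ.filter fun a => ν ∉ G.pathSet a i) ?_ ?_ ?_ ?_
  · simpa [G.mem_pathSet_self] using hνi
  · simpa using hν
  · simpa using G.left_mem_pathSet ν i
  · intro a ha b hab
    simp only [Finset.mem_filter, Finset.mem_univ, true_and] at ha ⊢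
    refine or_iff_not_imp_right.2 fun hbν hb => ?_
    rcases G.mem_pathSet_or (b := a) hb with h | h
    · rcases G.mem_pathSet_of_adj (G.adj_symm hab) h with h | h
      · exact hbν h.symm
      · exact ha (h ▸ G.left_mem_pathSet ν i)
    · exact ha h

lemma V_sq_lt {a b : Fin G.N} (hab : a ≠ b) : G.V a b ^ 2 < G.V a a * G.V b b := by
  have hx : (Pi.single a (G.V b b) - Pi.single b (G.V a b) : Fin G.N → ℚ) ≠ 0 := fun h => by
    simpa [hab, G.V_ne_zero] using congrFun h a
  have := G.posDef_V.dotProduct_mulVec_pos hx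
  simp only [star_trivial, Matrix.mulVec_sub, Matrix.mulVec_single, op_smul_eq_smul,
    dotProduct_sub, dotProduct_smul, sub_dotProduct, single_dotProduct, Matrix.col_apply,
    G.V_comm b a, smul_eq_mul, sub_pos] at this
  nlinarith [G.V_pos b b]

lemma V_mul_V_lt_of_adj {ν ν' j i : Fin G.N} (hadj : G.adj ν ν') (hj : ν' ∈ G.pathSet ν j)
    (hi : ν' ∈ G.pathSet ν i) (hle : G.V j ν' * G.V i ν' ≤ G.V ν' ν' * G.V i j) :
    G.V j ν * G.V i ν < G.V ν ν * G.V i j := by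
  have e1 := G.V_mul_V_eq_of_mem_pathSet (G.mem_pathSet_comm.1 hj)
  have e2 := G.V_mul_V_eq_of_mem_pathSet hi
  have hpos : 0 < G.V ν' ν' ^ 2 := by have := G.V_pos ν' ν'; positivity
  refine lt_of_mul_lt_mul_left ?_ hpos.le
  calc G.V ν' ν' ^ 2 * (G.V j ν * G.V i ν)
      = (G.V ν' ν' * G.V ν j) * (G.V ν' ν' * G.V i ν) := by rw [G.V_comm j ν]; ring
    _ = (G.V j ν' * G.V i ν') * G.V ν ν' ^ 2 := by rw [e1, e2]; ring
    _ ≤ (G.V ν' ν' * G.V i j) * G.V ν ν' ^ 2 := mul_le_mul_of_nonneg_right hle (sq_nonneg _)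
    _ < (G.V ν' ν' * G.V i j) * (G.V ν ν * G.V ν' ν') :=
        mul_lt_mul_of_pos_left (G.V_sq_lt hadj.1) (mul_pos (G.V_pos _ _) (G.V_pos _ _))
    _ = G.V ν' ν' ^ 2 * (G.V ν ν * G.V i j) := by ring

lemma V_mul_V_le (j i ν : Fin G.N) : G.V j ν * G.V i ν ≤ G.V ν ν * G.V i j := by
  induction hd : G.graph.dist ν j using Nat.strong_induction_on generalizing ν with
  | _ n ih =>
    by_cases hν : ν ∈ G.pathSet j i
    · exact (G.V_mul_V_eq_of_mem_pathSet hν).symm.le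
    obtain ⟨ν', hadj, hj, hi⟩ := G.exists_adj_mem_pathSet_of_not_mem hν
    have hlt : G.graph.dist ν' j < n := by
      have : G.graph.dist ν ν' = 1 := SimpleGraph.dist_eq_one_iff_adj.2 hadj
      rw [mem_pathSet] at hj; omega
    exact (G.V_mul_V_lt_of_adj hadj hj hi (ih _ hlt ν' rfl)).le

lemma V_mul_V_lt_of_not_mem_pathSet {j i ν : Fin G.N} (hν : ν ∉ G.pathSet j i) :
    G.V j ν * G.V i ν < G.V ν ν * G.V i j := by
  obtain ⟨ν', hadj, hj, hi⟩ := G.exists_adj_mem_pathSet_of_not_mem hν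
  exact G.V_mul_V_lt_of_adj hadj hj hi (G.V_mul_V_le j i ν')

lemma mem_branch_iff {μ ν η : Fin G.N} : η ∈ G.branch μ ν ↔ μ ∉ G.pathSet ν η := by
  rw [branch, Finset.mem_filter]
  refine ⟨fun h => h.2.2.2, fun h => ⟨Finset.mem_univ η, ?_, ?_, h⟩⟩
  · rintro rfl; exact h (G.left_mem_pathSet _ _)
  · rintro rfl; exact h (G.right_mem_pathSet _ _)

lemma rhat_vecMul_V_apply (ν j x : Fin G.N) :
    (G.rhat ν j ᵥ* G.V) x = (G.V ν ν * G.V x j - G.V j ν * G.V x ν) / G.V ν ν := by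
  simp only [Matrix.vecMul, dotProduct, rhat, rho, mul_ite, mul_one, mul_zero, sub_mul, ite_mul,
    one_mul, zero_mul, Finset.sum_sub_distrib, Finset.sum_ite_eq', Finset.mem_univ, if_true]
  field_simp [G.V_ne_zero ν ν]
  rw [G.V_comm j x, G.V_comm ν x]; ring

lemma rhat_vecMul_V_nonneg (ν j x : Fin G.N) : 0 ≤ (G.rhat ν j ᵥ* G.V) x := by
  rw [rhat_vecMul_V_apply]
  exact div_nonneg (sub_nonneg.2 (G.V_mul_V_le j x ν)) (G.V_pos ν ν).le

lemma rhat_vecMul_V_pos_iff (ν j x : Fin G.N) :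
    0 < (G.rhat ν j ᵥ* G.V) x ↔ x ∈ G.branch ν j := by
  rw [rhat_vecMul_V_apply, div_pos_iff_of_pos_right (G.V_pos ν ν), sub_pos, mem_branch_iff]
  exact ⟨fun h hν => h.ne (G.V_mul_V_eq_of_mem_pathSet hν).symm, G.V_mul_V_lt_of_not_mem_pathSet⟩

lemma mem_nbrs {μ ν : Fin G.N} : ν ∈ G.nbrs μ ↔ G.adj μ ν := by
  rw [nbrs, Finset.mem_filter]
  exact and_iff_right (Finset.mem_univ ν)

lemma self_mem_branch {μ i : Fin G.N} (h : G.adj μ i) : i ∈ G.branch μ i := by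
  rw [mem_branch_iff, mem_pathSet_self]
  exact h.1

lemma mem_pathSet_of_adj_of_adj {μ ν i : Fin G.N} (hν : G.adj μ ν) (hi : G.adj μ i)
    (hne : ν ≠ i) : μ ∈ G.pathSet ν i := by
  have h1 : G.graph.dist ν μ = 1 := SimpleGraph.dist_eq_one_iff_adj.2 (G.adj_symm hν)
  have h2 : G.graph.dist μ i = 1 := SimpleGraph.dist_eq_one_iff_adj.2 hi
  have h3 := G.connected.dist_triangle (u := ν) (v := μ) (w := i)
  have h4 : G.graph.dist ν i ≠ 0 := fun h => hne (G.connected.dist_eq_zero_iff.1 h)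
  have h5 : G.graph.dist ν i ≠ 1 := fun h =>
    G.not_adj_of_adj_of_adj hν hi (SimpleGraph.dist_eq_one_iff_adj.1 h)
  rw [mem_pathSet]; omega

lemma eq_of_adj_of_mem_branch {μ ν i : Fin G.N} (hν : G.adj μ ν) (hi : G.adj μ i)
    (hb : i ∈ G.branch μ ν) : ν = i := by
  by_contra hne
  exact G.mem_branch_iff.1 hb (G.mem_pathSet_of_adj_of_adj hν hi hne)

lemma eq_of_mem_branch_of_mem_branch {μ ν ν' i : Fin G.N} (hν : G.adj μ ν) (hν' : G.adj μ ν')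
    (h : i ∈ G.branch μ ν) (h' : i ∈ G.branch μ ν') : ν = ν' := by
  by_contra hne
  rcases G.mem_pathSet_or (b := i) (G.mem_pathSet_of_adj_of_adj hν hν' hne) with hi | hi
  · exact G.mem_branch_iff.1 h hi
  · exact G.mem_branch_iff.1 h' (G.mem_pathSet_comm.1 hi)

lemma exists_adj_mem_branch {μ i : Fin G.N} (hi : i ≠ μ) : ∃ ν, G.adj μ ν ∧ i ∈ G.branch μ ν := by
  obtain ⟨ν, hadj, hd⟩ := G.connected.exists_adj_dist_add_one hi.symm
  refine ⟨ν, hadj, G.mem_branch_iff.2 fun h => ?_⟩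
  have : G.graph.dist ν μ = 1 := SimpleGraph.dist_eq_one_iff_adj.2 (G.adj_symm hadj)
  rw [mem_pathSet] at h; omega

lemma mem_pathSet_of_mem_branch {μ ν j : Fin G.N} (hν : G.adj μ ν) (hj : j ∈ G.branch μ ν) :
    ν ∈ G.pathSet μ j := by
  obtain ⟨c, hc, hcν, hcj⟩ := G.exists_adj_mem_pathSet_of_not_mem (G.mem_branch_iff.1 hj)
  rcases G.mem_pathSet_of_adj hν hcν with rfl | rfl
  · exact absurd rfl hc.1
  · exact hcj

lemma not_mem_branch_of_dist_le_one {μ ν j x : Fin G.N} (hν : G.adj μ ν)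
    (hj : j ∈ G.branch μ ν) (hx : G.dist μ x ≤ 1) : x ∉ G.branch ν j := by
  rw [mem_branch_iff, not_not]
  have hνj := G.mem_pathSet_of_mem_branch hν hj
  rcases Nat.le_one_iff_eq_zero_or_eq_one.1 hx with h | h
  · rw [← (G.connected.dist_eq_zero_iff.1 h)]; exact G.mem_pathSet_comm.1 hνj
  rcases G.mem_pathSet_or (b := x) hνj with h' | h'
  · rcases G.mem_pathSet_of_adj (SimpleGraph.dist_eq_one_iff_adj.1 h) h' with rfl | rfl
    · exact absurd rfl hν.1
    · exact G.right_mem_pathSet _ _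
  · exact G.mem_pathSet_comm.1 h'

lemma rho_eq_rho_of_mem_branch {μ i j : Fin G.N} (hi : G.adj μ i) (hj : j ∈ G.branch μ i) :
    G.rho i j i = G.rho i j μ := by
  have h := G.V_mul_V_eq_of_mem_pathSet (G.mem_pathSet_comm.1 (G.mem_pathSet_of_mem_branch hi hj))
  rw [G.V_comm μ j] at h
  rw [rho, rho, div_eq_div_iff (G.V_ne_zero i i) (G.V_ne_zero i μ), G.V_comm i μ]
  linarith

lemma ne_of_mem_branch {μ ν η : Fin G.N} (h : η ∈ G.branch μ ν) : η ≠ μ :=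
  (Finset.mem_filter.1 h).2.2.1

lemma rhat_apply (μ γ x : Fin G.N) :
    G.rhat μ γ x = (if x = γ then 1 else 0) - G.rho μ γ μ * if x = μ then 1 else 0 := rfl

lemma rhat_self_apply (i : Fin G.N) : G.rhat i i i = 0 := by
  simp [rhat_apply, rho, G.V_ne_zero]

lemma phi_mul_V (η μ γ ν : Fin G.N) : G.phi η μ γ ν * G.V η ν = (G.rhat μ γ ᵥ* G.V) ν :=
  div_mul_cancel₀ _ (G.V_ne_zero η ν)

section Transform

variable (μ : Fin G.N) (fh gh hh : Fin G.N → ℚ)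

lemma transform_apply (x : Fin G.N) : G.transform μ fh gh hh x = fh x
    - ∑ ν ∈ G.nbrs μ, ∑ j ∈ G.branch μ ν, gh j * G.rhat ν j x
    + ∑ ν ∈ G.nbrs μ, hh ν * G.rhat μ ν x := by
  simp [transform, Finset.sum_apply]

lemma transform_apply_self :
    G.transform μ fh gh hh μ = fh μ - ∑ ν ∈ G.nbrs μ, G.rho μ ν μ * hh ν := by
  rw [transform_apply, Finset.sum_eq_zero fun ν hν => Finset.sum_eq_zero fun j hj => ?_]
  · rw [sub_zero, sub_eq_add_neg, ← Finset.sum_neg_distrib]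
    refine congrArg _ (Finset.sum_congr rfl fun ν hν => ?_)
    rw [rhat_apply, if_neg (G.mem_nbrs.1 hν).1, if_pos rfl]
    ring
  · simp [rhat_apply, (G.ne_of_mem_branch hj).symm, (G.mem_nbrs.1 hν).1]

lemma transform_apply_of_mem_nbrs {i : Fin G.N} (hi : i ∈ G.nbrs μ) :
    G.transform μ fh gh hh i = fh i + hh i + ∑ j ∈ (G.branch μ i).erase i, G.rho i j μ * gh j := by
  have hadj := G.mem_nbrs.1 hi
  have hT2 : ∑ ν ∈ G.nbrs μ, hh ν * G.rhat μ ν i = hh i := by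
    simp [rhat_apply, hadj.1.symm, hi]
  have hT1 : ∑ ν ∈ G.nbrs μ, ∑ j ∈ G.branch μ ν, gh j * G.rhat ν j i
      = ∑ j ∈ G.branch μ i, gh j * G.rhat i j i := by
    refine Finset.sum_eq_single_of_mem i hi fun ν hν hne => Finset.sum_eq_zero fun j hj => ?_
    have hij : i ≠ j := fun h => hne (G.eq_of_adj_of_mem_branch (G.mem_nbrs.1 hν) hadj (h ▸ hj))
    simp [rhat_apply, hij, hne.symm]
  have hterm : ∀ j ∈ (G.branch μ i).erase i, gh j * G.rhat i j i = -(G.rho i j μ * gh j) := by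
    intro j hj
    rw [rhat_apply, if_neg (Finset.ne_of_mem_erase hj).symm, if_pos rfl,
      G.rho_eq_rho_of_mem_branch hadj (Finset.mem_of_mem_erase hj)]
    ring
  rw [transform_apply, hT1, hT2, ← Finset.add_sum_erase _ _ (G.self_mem_branch hadj),
    Finset.sum_congr rfl hterm, Finset.sum_neg_distrib, rhat_self_apply]
  ring

lemma transform_apply_of_not_mem_nbrs {x : Fin G.N} (hxμ : x ≠ μ) (hx : x ∉ G.nbrs μ) :
    G.transform μ fh gh hh x = fh x - gh x := by
  have hxν : ∀ ν ∈ G.nbrs μ, x ≠ ν := fun ν hν h => hx (h ▸ hν)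
  have hT2 : ∑ ν ∈ G.nbrs μ, hh ν * G.rhat μ ν x = 0 :=
    Finset.sum_eq_zero fun ν hν => by simp [rhat_apply, hxμ, hxν ν hν]
  obtain ⟨ν₀, hν₀, hxν₀⟩ := G.exists_adj_mem_branch hxμ
  have hT1 : ∑ ν ∈ G.nbrs μ, ∑ j ∈ G.branch μ ν, gh j * G.rhat ν j x = gh x := by
    rw [Finset.sum_eq_single_of_mem ν₀ (G.mem_nbrs.2 hν₀) fun ν hν hne =>
      Finset.sum_eq_zero fun j hj => ?_]
    · rw [Finset.sum_eq_single_of_mem x hxν₀ fun j _ hjx => ?_]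
      · simp [rhat_apply, hxν ν₀ (G.mem_nbrs.2 hν₀)]
      · simp [rhat_apply, hjx.symm, hxν ν₀ (G.mem_nbrs.2 hν₀)]
    · have hxj : x ≠ j := fun h => hne <|
        G.eq_of_mem_branch_of_mem_branch (G.mem_nbrs.1 hν) hν₀ (h ▸ hj) hxν₀
      simp [rhat_apply, hxj, hxν ν hν]
  rw [transform_apply, hT1, hT2]
  ring

lemma transform_zero_right_vecMul_V_apply (i : Fin G.N) : (G.transform μ fh gh 0 ᵥ* G.V) i
    = (fh ᵥ* G.V) i - ∑ ν ∈ G.nbrs μ, ∑ j ∈ G.branch μ ν, gh j * (G.rhat ν j ᵥ* G.V) i := by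
  simp [transform, Matrix.sub_vecMul, Matrix.sum_vecMul, Matrix.smul_vecMul, Finset.sum_apply]

lemma transform_zero_middle_vecMul_V_apply (i : Fin G.N) : (G.transform μ fh 0 hh ᵥ* G.V) i
    = (fh ᵥ* G.V) i + ∑ ν ∈ G.nbrs μ, hh ν * (G.rhat μ ν ᵥ* G.V) i := by
  simp [transform, Matrix.add_vecMul, Matrix.sum_vecMul, Matrix.smul_vecMul, Finset.sum_apply]

lemma transform_zero_right_vecMul_V_le (hgh : ∀ j, 0 ≤ gh j) (i : Fin G.N) :
    (G.transform μ fh gh 0 ᵥ* G.V) i ≤ (fh ᵥ* G.V) i := by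
  rw [transform_zero_right_vecMul_V_apply, sub_le_self_iff]
  exact Finset.sum_nonneg fun ν _ => Finset.sum_nonneg fun j _ =>
    mul_nonneg (hgh j) (G.rhat_vecMul_V_nonneg ν j i)

lemma transform_zero_right_vecMul_V_eq_of_dist_le_one {i : Fin G.N} (hi : G.dist μ i ≤ 1) :
    (G.transform μ fh gh 0 ᵥ* G.V) i = (fh ᵥ* G.V) i := by
  rw [transform_zero_right_vecMul_V_apply, sub_eq_self]
  refine Finset.sum_eq_zero fun ν hν => Finset.sum_eq_zero fun j hj => ?_
  have hpos := (G.rhat_vecMul_V_pos_iff ν j i).not.2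
    (G.not_mem_branch_of_dist_le_one (G.mem_nbrs.1 hν) hj hi)
  rw [(G.rhat_vecMul_V_nonneg ν j i).antisymm' (not_lt.1 hpos), mul_zero]

lemma transform_zero_right_vecMul_V_lt_iff (hgh : ∀ j, 0 ≤ gh j) (i : Fin G.N) :
    (G.transform μ fh gh 0 ᵥ* G.V) i < (fh ᵥ* G.V) i ↔
      ∃ ν ∈ G.nbrs μ, ∃ j ∈ G.branch μ ν, 0 < gh j ∧ i ∈ G.branch ν j := by
  rw [transform_zero_right_vecMul_V_apply, sub_lt_self_iff, Finset.sum_pos_iff_of_nonneg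
    fun ν _ => Finset.sum_nonneg fun j _ => mul_nonneg (hgh j) (G.rhat_vecMul_V_nonneg ν j i)]
  simp only [Finset.sum_mul_pos_iff_of_nonneg (fun j _ => hgh j)
    (fun j _ => G.rhat_vecMul_V_nonneg _ j i), rhat_vecMul_V_pos_iff]

lemma le_transform_zero_middle_vecMul_V (hhh : ∀ j, 0 ≤ hh j) (i : Fin G.N) :
    (fh ᵥ* G.V) i ≤ (G.transform μ fh 0 hh ᵥ* G.V) i := by
  rw [transform_zero_middle_vecMul_V_apply, le_add_iff_nonneg_right]
  exact Finset.sum_nonneg fun ν _ => mul_nonneg (hhh ν) (G.rhat_vecMul_V_nonneg μ ν i)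

lemma lt_transform_zero_middle_vecMul_V_iff (hhh : ∀ j, 0 ≤ hh j) (i : Fin G.N) :
    (fh ᵥ* G.V) i < (G.transform μ fh 0 hh ᵥ* G.V) i ↔
      ∃ ν ∈ G.nbrs μ, 0 < hh ν ∧ i ∈ G.branch μ ν := by
  rw [transform_zero_middle_vecMul_V_apply, lt_add_iff_pos_right,
    Finset.sum_mul_pos_iff_of_nonneg (fun ν _ => hhh ν) (fun ν _ => G.rhat_vecMul_V_nonneg μ ν i)]
  simp only [rhat_vecMul_V_pos_iff]

end Transform

end DualGraph

/-- Entries of the transform `f̂_{⟨ĝ⟩[ĥ]}` and behaviour of the valuation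
vectors of `f̂_{⟨ĝ⟩}` and `f̂_{[ĥ]}`. -/
theorem stmt6 (G : DualGraph) (μ : Fin G.N) (fh gh hh : Fin G.N → ℚ) :
    (G.transform μ fh gh hh μ = fh μ - ∑ ν ∈ G.nbrs μ, G.rho μ ν μ * hh ν) ∧
    (∀ i ∈ G.nbrs μ, G.transform μ fh gh hh i
        = fh i + hh i + ∑ j ∈ (G.branch μ i).erase i, G.rho i j μ * gh j) ∧
    (∀ i, i ≠ μ → i ∉ G.nbrs μ → G.transform μ fh gh hh i = fh i - gh i) ∧
    (∀ i, (G.transform μ fh gh 0 ᵥ* G.V) i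
        = (fh ᵥ* G.V) i
          - ∑ ν ∈ G.nbrs μ, ∑ j ∈ G.branch μ ν, gh j * G.phi μ ν j i * G.V μ i) ∧
    ((∀ j, 0 ≤ gh j) → ∀ i,
      (G.transform μ fh gh 0 ᵥ* G.V) i ≤ (fh ᵥ* G.V) i ∧
      (G.dist μ i ≤ 1 → (G.transform μ fh gh 0 ᵥ* G.V) i = (fh ᵥ* G.V) i) ∧
      ((G.transform μ fh gh 0 ᵥ* G.V) i < (fh ᵥ* G.V) i ↔
        ∃ ν ∈ G.nbrs μ, ∃ j ∈ G.branch μ ν, 0 < gh j ∧ i ∈ G.branch ν j)) ∧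
    (∀ i, (G.transform μ fh 0 hh ᵥ* G.V) i
        = (fh ᵥ* G.V) i + ∑ ν ∈ G.nbrs μ, hh ν * G.phi μ μ ν i * G.V μ i) ∧
    ((∀ j, 0 ≤ hh j) → ∀ i,
      (fh ᵥ* G.V) i ≤ (G.transform μ fh 0 hh ᵥ* G.V) i ∧
      ((fh ᵥ* G.V) i < (G.transform μ fh 0 hh ᵥ* G.V) i ↔
        ∃ ν ∈ G.nbrs μ, 0 < hh ν ∧ i ∈ G.branch μ ν)) := by
  refine ⟨G.transform_apply_self μ fh gh hh,
    fun i hi => G.transform_apply_of_mem_nbrs μ fh gh hh hi, fun i hiμ hi => G.transform_apply_of_not_mem_nbrs μ fh gh hh hiμ hi, fun i => ?_,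
    fun hgh i => ⟨G.transform_zero_right_vecMul_V_le μ fh gh hgh i,
      G.transform_zero_right_vecMul_V_eq_of_dist_le_one μ fh gh,
      G.transform_zero_right_vecMul_V_lt_iff μ fh gh hgh i⟩, fun i => ?_,
    fun hhh i => ⟨G.le_transform_zero_middle_vecMul_V μ fh hh hhh i,
      G.lt_transform_zero_middle_vecMul_V_iff μ fh hh hhh i⟩⟩
  · simp only [mul_assoc, DualGraph.phi_mul_V, DualGraph.transform_zero_right_vecMul_V_apply]
  · simp only [mul_assoc, DualGraph.phi_mul_V, DualGraph.transform_zero_middle_vecMul_V_apply]
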